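/- Let K be a nonempty closed subset of ℝⁿ and let pr : ℝⁿ → ℝⁿ be a Borel measurable selection of the metric projection onto K. For Lebesgue almost all y ∈ ℝⁿ, pr is differentiable at y in the extended sense, and the derivative matrix A at such y is symmetric and positive semidefinite; in particular its diagonal entries satisfy ∂ᵢprᵢ(y) = Aᵢᵢ ≥ 0 for i = 1, …, n. -/

import Mathlib

/-!
The potential `f z = (‖z‖² - d(z, K)²) / 2 = sup_{q ∈ K} (⟪q, z⟫ - ‖q‖² / 2)` is convex, and every
nearest point of `K` to `y` is a subgradient of `f` at `y`. The proximal map `R` of `f` is firmly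
nonexpansive and is the gradient of a convex function, so by Rademacher's theorem it is
differentiable almost everywhere, with a symmetric derivative `B` satisfying `‖B v‖² ≤ ⟪v, B v⟫`.
Since `R (y + pr y) = y`, Sard's lemma shows that for almost every `y` the map `R` is differentiable
at `y + pr y` with invertible derivative `B`. At such `y` the nearest point is unique (two of them
would make `R` constant on a segment in a direction killed by `B`), so `pr` is continuous at `y`,
and inverting `R` gives `pr' y = B⁻¹ - 1`, which is symmetric and positive semidefinite.
-/

open MeasureTheory Metric Asymptotics Filter
open scoped RealInnerProductSpace Topology

/-- The set of points whose metric projection onto `K` is unique. -/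
def uniqSet (n : ℕ) (K : Set (EuclideanSpace ℝ (Fin n))) : Set (EuclideanSpace ℝ (Fin n)) :=
  {y | ∃! x, x ∈ K ∧ dist y x = infDist y K}

/-- `f : D → ℝⁿ` is differentiable at `y ∈ D` in the extended sense with derivative `A`:
there is a neighborhood `N` of `y` such that `N \ D` is Lebesgue null and
`f x = f y + A (x - y) + o(‖x - y‖)` for `x ∈ D ∩ N` as `x → y`. -/
def DiffExtended {n : ℕ} (D : Set (EuclideanSpace ℝ (Fin n)))
    (f : EuclideanSpace ℝ (Fin n) → EuclideanSpace ℝ (Fin n))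
    (y : EuclideanSpace ℝ (Fin n))
    (A : EuclideanSpace ℝ (Fin n) →L[ℝ] EuclideanSpace ℝ (Fin n)) : Prop :=
  y ∈ D ∧ ∃ N ∈ 𝓝 y, volume (N \ D) = 0 ∧
    (fun x => f x - f y - A (x - y)) =o[𝓝[D ∩ N] y] fun x => x - y

open Set

section NormedSpace

variable {F : Type*} [NormedAddCommGroup F] [NormedSpace ℝ F]

theorem HasFDerivAt.apply_eq_zero_of_forall_mem_Icc {G : Type*} [NormedAddCommGroup G]
    [NormedSpace ℝ G] {g : F → G} {g' : F →L[ℝ] G} {x v : F} (hg : HasFDerivAt g g' x)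
    (hconst : ∀ t ∈ Icc (0 : ℝ) 1, g (x + t • v) = g x) : g' v = 0 := by
  have hline : HasDerivAt (fun t : ℝ => x + t • v) v 0 := by
    simpa using ((hasDerivAt_id (0 : ℝ)).smul_const v).const_add x
  have hg₀ : HasFDerivAt g g' (x + (0 : ℝ) • v) := by simpa using hg
  have h₁ : HasDerivWithinAt (fun t : ℝ => g (x + t • v)) (g' v) (Ici 0) 0 :=
    (hg₀.comp_hasDerivAt 0 hline).hasDerivWithinAt
  have h₂ : HasDerivWithinAt (fun t : ℝ => g (x + t • v)) 0 (Ici 0) 0 :=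
    (hasDerivWithinAt_const 0 _ (g x)).congr_of_eventuallyEq
      (eventually_of_mem (Icc_mem_nhdsGE one_pos) hconst) (by simp)
  exact (uniqueDiffWithinAt_Ici 0).eq_deriv _ h₁ h₂

theorem hasFDerivAt_of_leftInverse_id_add {R pr : F → F} (hinv : ∀ x, R (x + pr x) = x) {y : F}
    (hpr : ContinuousAt pr y) {B : F ≃L[ℝ] F} (hB : HasFDerivAt R (B : F →L[ℝ] F) (y + pr y)) :
    HasFDerivAt pr ((B.symm : F →L[ℝ] F) - ContinuousLinearMap.id ℝ F) y := by
  have := HasFDerivAt.of_local_left_inverse (g := fun x => x + pr x) (continuousAt_id.add hpr) hB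
    (Eventually.of_forall hinv)
  convert this.sub (hasFDerivAt_id y) using 1
  ext x
  simp

variable [FiniteDimensional ℝ F] [MeasurableSpace F] [BorelSpace F] {μ : Measure F}
  [μ.IsAddHaarMeasure]

theorem LipschitzWith.addHaar_image_eq_zero {C : NNReal} {g : F → F} (hg : LipschitzWith C g)
    {s : Set F} (hs : μ s = 0) : μ (g '' s) = 0 := by
  set d := Module.finrank ℝ F
  have hμ : μ ≪ μH[d] := Measure.absolutelyContinuous_isAddHaarMeasure _ _
  have hH : μH[d] s = 0 := Measure.absolutelyContinuous_isAddHaarMeasure _ _ hs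
  refine hμ (le_antisymm ?_ zero_le)
  simpa [hH] using hg.hausdorffMeasure_image_le (d := d) d.cast_nonneg s

theorem LipschitzWith.ae_exists_hasFDerivAt_of_leftInverse {C : NNReal} {R Φ : F → F}
    (hR : LipschitzWith C R) (hRΦ : ∀ y, R (Φ y) = y) :
    ∀ᵐ y ∂μ, ∃ B : F ≃L[ℝ] F, HasFDerivAt R (B : F →L[ℝ] F) (Φ y) := by
  set Z₁ := {w | ¬DifferentiableAt ℝ R w}
  set Z₂ := {w | DifferentiableAt ℝ R w ∧ (fderiv ℝ R w).det = 0}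
  have h₁ : μ (R '' Z₁) = 0 := hR.addHaar_image_eq_zero (ae_iff.mp hR.ae_differentiableAt)
  have h₂ : μ (R '' Z₂) = 0 := addHaar_image_eq_zero_of_det_fderivWithin_eq_zero μ
    (fun w hw => hw.1.hasFDerivAt.hasFDerivWithinAt) fun w hw => hw.2
  filter_upwards [compl_mem_ae_iff.mpr (measure_union_null h₁ h₂)] with y hy
  obtain ⟨hdiff, hdet⟩ : DifferentiableAt ℝ R (Φ y) ∧ (fderiv ℝ R (Φ y)).det ≠ 0 := by
    have : Φ y ∉ Z₁ ∪ Z₂ := fun h => hy (image_union R Z₁ Z₂ ▸ ⟨Φ y, h, hRΦ y⟩)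
    simp only [Z₁, Z₂, mem_union, mem_ofPred_eq] at this
    tauto
  refine ⟨(fderiv ℝ R (Φ y)).toContinuousLinearEquivOfDetNeZero hdet, ?_⟩
  rw [ContinuousLinearMap.coe_toContinuousLinearEquivOfDetNeZero]
  exact hdiff.hasFDerivAt

end NormedSpace

section InnerProductSpace

variable {F : Type*} [NormedAddCommGroup F] [InnerProductSpace ℝ F]

def HasSubgradientAt (f : F → ℝ) (p y : F) : Prop :=
  ∀ z, f y + ⟪p, z - y⟫ ≤ f z

theorem convex_setOf_hasSubgradientAt (f : F → ℝ) (y : F) :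
    Convex ℝ {p | HasSubgradientAt f p y} := by
  intro p hp q hq a b ha hb hab z
  have := add_le_add (mul_le_mul_of_nonneg_left (hp z) ha) (mul_le_mul_of_nonneg_left (hq z) hb)
  rw [inner_add_left, real_inner_smul_left, real_inner_smul_left]
  linear_combination this + (f z - f y) * hab

theorem convexOn_univ_of_forall_hasSubgradientAt {f : F → ℝ}
    (h : ∀ y, ∃ p, HasSubgradientAt f p y) : ConvexOn ℝ univ f := by
  refine ⟨convex_univ, fun x _ y _ a b ha hb hab => ?_⟩
  set m := a • x + b • y
  obtain ⟨p, hp⟩ := h m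
  have hbal : a • (x - m) + b • (y - m) = 0 := by
    linear_combination (norm := module) -(hab • m)
  have := add_le_add (mul_le_mul_of_nonneg_left (hp x) ha) (mul_le_mul_of_nonneg_left (hp y) hb)
  have hzero : a * ⟪p, x - m⟫ + b * ⟪p, y - m⟫ = 0 := by
    rw [← real_inner_smul_right, ← real_inner_smul_right, ← inner_add_right, hbal, inner_zero_right]
  simp only [smul_eq_mul]
  linear_combination this - hzero - f m * hab

theorem hasFDerivAt_of_forall_hasSubgradientAt {ψ : F → ℝ} {g : F → F} {w : F}
    (hψ : ∀ v, HasSubgradientAt ψ (g v) v) (hg : ContinuousAt g w) :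
    HasFDerivAt ψ (innerSL ℝ (g w)) w := by
  -- `ψ` lies between its tangent planes at `w` and at `v`.
  have hbound : ∀ v, ‖ψ v - ψ w - innerSL ℝ (g w) (v - w)‖ ≤ ‖g v - g w‖ * ‖v - w‖ := by
    intro v
    have h₁ := hψ w v
    have h₂ := hψ v w
    have h₃ := real_inner_le_norm (g v - g w) (v - w)
    rw [← neg_sub v w, inner_neg_right] at h₂
    rw [inner_sub_left] at h₃
    rw [innerSL_apply_apply, Real.norm_eq_abs, abs_le]
    constructor <;> linarith
  have hsmall : (fun v => ‖g v - g w‖ * ‖v - w‖) =o[𝓝 w] fun v => v - w := by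
    have h₀ : (fun v => ‖g v - g w‖) =o[𝓝 w] fun _ => (1 : ℝ) :=
      (isLittleO_one_iff ℝ).mpr (tendsto_iff_norm_sub_tendsto_zero.mp hg)
    simpa using (h₀.mul_isBigO (isBigO_refl (fun v => ‖v - w‖) (𝓝 w))).norm_right
  exact .of_isLittleO <| (IsBigO.of_bound 1 (Eventually.of_forall fun v => by
    simpa using hbound v)).trans_isLittleO hsmall

theorem isSymmetric_of_hasFDerivAt_gradient {ψ : F → ℝ} {g : F → F} {B : F →L[ℝ] F} {w : F}
    (hψ : ∀ v, HasFDerivAt ψ (innerSL ℝ (g v)) v) (hg : HasFDerivAt g B w) :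
    (B : F →ₗ[ℝ] F).IsSymmetric := by
  intro u v
  have := second_derivative_symmetric hψ ((innerSL ℝ).hasFDerivAt.comp w hg) u v
  change ⟪B u, v⟫ = ⟪B v, u⟫ at this
  rw [ContinuousLinearMap.coe_coe, this, real_inner_comm]

def FirmlyNonexpansive (R : F → F) : Prop :=
  ∀ w₁ w₂, ‖R w₁ - R w₂‖ ^ 2 ≤ ⟪w₁ - w₂, R w₁ - R w₂⟫

namespace FirmlyNonexpansive

variable {R : F → F}

theorem lipschitzWith_one (hR : FirmlyNonexpansive R) : LipschitzWith 1 R := by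
  refine LipschitzWith.of_dist_le_mul fun w₁ w₂ => ?_
  rw [NNReal.coe_one, one_mul, dist_eq_norm, dist_eq_norm]
  have := (hR w₁ w₂).trans (real_inner_le_norm _ _)
  nlinarith [norm_nonneg (R w₁ - R w₂), norm_nonneg (w₁ - w₂)]

theorem lipschitzWith_two_smul_sub (hR : FirmlyNonexpansive R) :
    LipschitzWith 1 fun w => (2 : ℝ) • R w - w := by
  refine LipschitzWith.of_dist_le_mul fun w₁ w₂ => ?_
  rw [NNReal.coe_one, one_mul, dist_eq_norm, dist_eq_norm]
  have hsq : ‖(2 : ℝ) • R w₁ - w₁ - ((2 : ℝ) • R w₂ - w₂)‖ ^ 2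
      = ‖w₁ - w₂‖ ^ 2 - 4 * (⟪w₁ - w₂, R w₁ - R w₂⟫ - ‖R w₁ - R w₂‖ ^ 2) := by
    rw [show (2 : ℝ) • R w₁ - w₁ - ((2 : ℝ) • R w₂ - w₂)
      = (2 : ℝ) • (R w₁ - R w₂) - (w₁ - w₂) by module, norm_sub_sq_real, norm_smul,
      real_inner_smul_left, real_inner_comm, Real.norm_two]
    ring
  have := hR w₁ w₂
  exact pow_le_pow_iff_left₀ (norm_nonneg _) (norm_nonneg _) two_ne_zero |>.mp (by linarith)

theorem norm_sq_le_inner_of_hasFDerivAt (hR : FirmlyNonexpansive R) {B : F →L[ℝ] F} {w : F}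
    (hB : HasFDerivAt R B w) (v : F) : ‖B v‖ ^ 2 ≤ ⟪v, B v⟫ := by
  have hT : HasFDerivAt (fun w => (2 : ℝ) • R w - w)
      ((2 : ℝ) • B - ContinuousLinearMap.id ℝ F) w :=
    (hB.const_smul 2).sub (hasFDerivAt_id w)
  have hle := ((2 : ℝ) • B - ContinuousLinearMap.id ℝ F).le_of_opNorm_le
    (hT.le_of_lipschitz hR.lipschitzWith_two_smul_sub) v
  simp only [sub_apply, smul_apply, ContinuousLinearMap.id_apply, NNReal.coe_one, one_mul] at hle
  have hsq := pow_le_pow_left₀ (norm_nonneg _) hle 2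
  rw [norm_sub_sq_real, norm_smul, real_inner_smul_left, real_inner_comm, Real.norm_two] at hsq
  nlinarith

end FirmlyNonexpansive

def IsProxMap (f : F → ℝ) (R : F → F) : Prop :=
  ∀ w x, f (R w) + ‖R w - w‖ ^ 2 / 2 ≤ f x + ‖x - w‖ ^ 2 / 2

/-- The convex conjugate of `f + ‖·‖² / 2`; its gradient is the proximal map `R`. -/
noncomputable def proxPotential (f : F → ℝ) (R : F → F) (v : F) : ℝ :=
  ⟪R v, v⟫ - f (R v) - ‖R v‖ ^ 2 / 2

namespace IsProxMap

variable {f : F → ℝ} {R : F → F}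

theorem hasSubgradientAt (hR : IsProxMap f R) (hf : ConvexOn ℝ univ f) (w : F) :
    HasSubgradientAt f (w - R w) (R w) := by
  intro z
  set u := z - R w
  set c := f z - f (R w) - ⟪w - R w, u⟫
  have hpos : ∀ t ∈ Ioc (0 : ℝ) 1, 0 ≤ c + t * (‖u‖ ^ 2 / 2) := by
    rintro t ⟨ht₀, ht₁⟩
    have hconv := hf.2 (mem_univ (R w)) (mem_univ z) (sub_nonneg.mpr ht₁) ht₀.le (by ring)
    rw [show (1 - t) • R w + t • z = R w + t • u by module, smul_eq_mul, smul_eq_mul] at hconv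
    have hmin := hR w (R w + t • u)
    rw [show R w + t • u - w = (R w - w) + t • u by abel, norm_add_sq_real, norm_smul,
      real_inner_smul_right, Real.norm_eq_abs, abs_of_pos ht₀,
      show R w - w = -(w - R w) by abel, inner_neg_left, norm_neg] at hmin
    nlinarith
  have hlim : Tendsto (fun t : ℝ => c + t * (‖u‖ ^ 2 / 2)) (𝓝[>] 0) (𝓝 c) := by
    refine tendsto_nhdsWithin_of_tendsto_nhds ?_
    exact (by fun_prop : Continuous fun t : ℝ => c + t * (‖u‖ ^ 2 / 2)).tendsto' 0 c (by simp)
  have := ge_of_tendsto hlim (eventually_of_mem (Ioc_mem_nhdsGT one_pos) hpos)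
  linarith

theorem apply_add_eq (hR : IsProxMap f R) {p y : F} (hp : HasSubgradientAt f p y) :
    R (y + p) = y := by
  have hmin := hR (y + p) y
  have hsub := hp (R (y + p))
  rw [show y - (y + p) = -p by abel, norm_neg,
    show R (y + p) - (y + p) = (R (y + p) - y) - p by abel, norm_sub_sq_real,
    real_inner_comm] at hmin
  have : ‖R (y + p) - y‖ ^ 2 ≤ 0 := by linarith
  rwa [sq_nonpos_iff, norm_eq_zero, sub_eq_zero] at this

theorem firmlyNonexpansive (hR : IsProxMap f R) (hf : ConvexOn ℝ univ f) :
    FirmlyNonexpansive R := by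
  intro w₁ w₂
  have h₁ := hR.hasSubgradientAt hf w₁ (R w₂)
  have h₂ := hR.hasSubgradientAt hf w₂ (R w₁)
  have hsum : ⟪w₁ - R w₁, R w₂ - R w₁⟫ + ⟪w₂ - R w₂, R w₁ - R w₂⟫
      = ‖R w₁ - R w₂‖ ^ 2 - ⟪w₁ - w₂, R w₁ - R w₂⟫ := by
    rw [show w₁ - R w₁ = (w₁ - w₂) - (R w₁ - R w₂) + (w₂ - R w₂) by abel,
      ← neg_sub (R w₁) (R w₂), inner_neg_right, inner_add_left, inner_sub_left,
      real_inner_self_eq_norm_sq]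
    ring
  linarith

theorem hasSubgradientAt_proxPotential (hR : IsProxMap f R) (w : F) :
    HasSubgradientAt (proxPotential f R) (R w) w := by
  intro w'
  have := hR w' (R w)
  simp only [proxPotential]
  rw [norm_sub_sq_real, norm_sub_sq_real, inner_sub_right] at *
  linarith

theorem isSymmetric_of_hasFDerivAt (hR : IsProxMap f R) (hf : ConvexOn ℝ univ f)
    {B : F →L[ℝ] F} {w : F} (hB : HasFDerivAt R B w) : (B : F →ₗ[ℝ] F).IsSymmetric :=
  isSymmetric_of_hasFDerivAt_gradient
    (fun _ => hasFDerivAt_of_forall_hasSubgradientAt hR.hasSubgradientAt_proxPotential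
      (hR.firmlyNonexpansive hf).lipschitzWith_one.continuous.continuousAt) hB

theorem eq_of_hasSubgradientAt (hR : IsProxMap f R) {p q y : F} (hp : HasSubgradientAt f p y)
    (hq : HasSubgradientAt f q y) {B : F ≃L[ℝ] F} (hB : HasFDerivAt R (B : F →L[ℝ] F) (y + p)) :
    p = q := by
  have hconst : ∀ t ∈ Icc (0 : ℝ) 1, R (y + p + t • (q - p)) = R (y + p) := fun t ht => by
    rw [add_assoc, hR.apply_add_eq ((convex_setOf_hasSubgradientAt f y).add_smul_sub_mem hp hq ht),
      hR.apply_add_eq hp]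
  have := HasFDerivAt.apply_eq_zero_of_forall_mem_Icc hB hconst
  rw [ContinuousLinearEquiv.coe_coe, map_eq_zero_iff _ B.injective, sub_eq_zero] at this
  exact this.symm

end IsProxMap

theorem exists_isProxMap [ProperSpace F] {f : F → ℝ} (hf : Continuous f)
    (hsub : ∀ w, ∃ p, HasSubgradientAt f p w) : ∃ R : F → F, IsProxMap f R := by
  suffices ∀ w, ∃ x, ∀ z, f x + ‖x - w‖ ^ 2 / 2 ≤ f z + ‖z - w‖ ^ 2 / 2 from
    ⟨fun w => (this w).choose, fun w => (this w).choose_spec⟩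
  intro w
  obtain ⟨p, hp⟩ := hsub w
  refine (hf.add (by fun_prop)).exists_forall_le ?_
  -- The affine minorant of `f` given by `p` makes the objective grow at least like `‖z‖`.
  refine tendsto_atTop_mono (fun z => ?_) (tendsto_atTop_add_const_left _
    (f w - ‖w‖ - (‖p‖ + 1) ^ 2 / 2) tendsto_norm_cocompact_atTop)
  simp only [Pi.add_apply]
  have h₁ := hp z
  have h₂ := neg_le_of_abs_le (abs_real_inner_le_norm p (z - w))
  have h₃ := norm_sub_norm_le z w
  nlinarith [sq_nonneg (‖z - w‖ - ‖p‖ - 1), norm_nonneg p]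

theorem ContinuousLinearEquiv.isSymmetric_symm_sub_id {B : F ≃L[ℝ] F}
    (hB : (B : F →ₗ[ℝ] F).IsSymmetric) :
    (((B.symm : F →L[ℝ] F) - ContinuousLinearMap.id ℝ F : F →L[ℝ] F) : F →ₗ[ℝ] F).IsSymmetric := by
  intro u v
  have := hB (B.symm u) (B.symm v)
  simp only [LinearEquiv.coe_coe, ContinuousLinearEquiv.coe_toLinearEquiv,
    ContinuousLinearEquiv.apply_symm_apply] at this
  simp [inner_sub_left, inner_sub_right, this]

theorem ContinuousLinearEquiv.inner_symm_sub_id_apply_self_nonneg {B : F ≃L[ℝ] F}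
    (hB : ∀ v, ‖(B : F →L[ℝ] F) v‖ ^ 2 ≤ ⟪v, (B : F →L[ℝ] F) v⟫) (v : F) :
    0 ≤ ⟪((B.symm : F →L[ℝ] F) - ContinuousLinearMap.id ℝ F) v, v⟫ := by
  have := hB (B.symm v)
  rw [ContinuousLinearEquiv.coe_coe, B.apply_symm_apply] at this
  simp only [sub_apply, ContinuousLinearEquiv.coe_coe, ContinuousLinearMap.id_apply,
    inner_sub_left, real_inner_self_eq_norm_sq]
  linarith

end InnerProductSpace

theorem continuousAt_of_unique_nearest {X : Type*} [MetricSpace X] [ProperSpace X]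
    {K : Set X} (hK : IsClosed K) {pr : X → X}
    (hsel : ∀ x, pr x ∈ K ∧ dist x (pr x) = infDist x K) {y : X}
    (huniq : ∀ q ∈ K, dist y q = infDist y K → q = pr y) : ContinuousAt pr y := by
  have hnear : ∀ ε > 0, ∀ᶠ x in 𝓝 y, pr x ∈ K ∩ closedBall y (infDist y K + ε) := by
    intro ε hε
    filter_upwards [ball_mem_nhds y (half_pos hε)] with x hx
    refine ⟨(hsel x).1, ?_⟩
    have := infDist_le_infDist_add_dist (x := x) (y := y) (s := K)
    rw [mem_closedBall, mem_ball] at *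
    linarith [dist_triangle y x (pr x), (hsel x).2, dist_comm x y, dist_comm (pr x) y]
  refine ((isCompact_closedBall y _).inter_left hK).tendsto_nhds_of_unique_mapClusterPt
    (hnear 1 one_pos) fun q hqs hq => huniq q hqs.1 ?_
  refine le_antisymm (le_of_forall_pos_le_add fun ε hε => ?_) (infDist_le_dist_of_mem hqs.1)
  exact mem_closedBall'.mp ((hK.inter isClosed_closedBall).mem_of_mapClusterPt hq (hnear ε hε)).2

section Projection

variable {F : Type*} [NormedAddCommGroup F]

noncomputable def projPotential (K : Set F) (z : F) : ℝ :=
  (‖z‖ ^ 2 - infDist z K ^ 2) / 2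

theorem continuous_projPotential (K : Set F) : Continuous (projPotential K) :=
  ((continuous_norm.pow 2).sub ((continuous_infDist_pt K).pow 2)).div_const 2

variable [InnerProductSpace ℝ F]

theorem hasSubgradientAt_projPotential {K : Set F} {y q : F} (hq : q ∈ K)
    (hyq : dist y q = infDist y K) : HasSubgradientAt (projPotential K) q y := by
  intro z
  have h₁ : infDist z K ^ 2 ≤ ‖z - q‖ ^ 2 := by
    rw [← dist_eq_norm]
    exact pow_le_pow_left₀ infDist_nonneg (infDist_le_dist_of_mem hq) 2
  have h₂ : infDist y K ^ 2 = ‖y - q‖ ^ 2 := by rw [← dist_eq_norm, hyq]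
  rw [norm_sub_sq_real] at h₁ h₂
  unfold projPotential
  rw [inner_sub_right, real_inner_comm z q, real_inner_comm y q]
  linarith

end Projection

theorem diffExtended_of_hasFDerivAt {n : ℕ} {D : Set (EuclideanSpace ℝ (Fin n))}
    {f : EuclideanSpace ℝ (Fin n) → EuclideanSpace ℝ (Fin n)} {y : EuclideanSpace ℝ (Fin n)}
    {A : EuclideanSpace ℝ (Fin n) →L[ℝ] EuclideanSpace ℝ (Fin n)} (hD : ∀ᵐ x, x ∈ D)
    (hy : y ∈ D) (hf : HasFDerivAt f A y) : DiffExtended D f y A :=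
  ⟨hy, univ, univ_mem, by rw [← compl_eq_univ_sdiff]; exact mem_ae_iff.mp hD,
    hf.isLittleO.mono nhdsWithin_le_nhds⟩

theorem metric_projection_ae_diffExtended
    (n : ℕ) (K : Set (EuclideanSpace ℝ (Fin n)))
    (hcl : IsClosed K)
    (pr : EuclideanSpace ℝ (Fin n) → EuclideanSpace ℝ (Fin n))
    (hsel : ∀ y, pr y ∈ K ∧ dist y (pr y) = infDist y K) :
    ∀ᵐ y ∂(volume : Measure (EuclideanSpace ℝ (Fin n))),
      ∃ A : EuclideanSpace ℝ (Fin n) →L[ℝ] EuclideanSpace ℝ (Fin n),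
        DiffExtended (uniqSet n K) pr y A ∧
        (∀ v w, ⟪A v, w⟫ = ⟪v, A w⟫) ∧
        (∀ v, 0 ≤ ⟪A v, v⟫) ∧
        (∀ i : Fin n, 0 ≤ A (EuclideanSpace.single i 1) i) := by
  have hsub : ∀ y, HasSubgradientAt (projPotential K) (pr y) y := fun y =>
    hasSubgradientAt_projPotential (hsel y).1 (hsel y).2
  obtain ⟨R, hR⟩ := exists_isProxMap (continuous_projPotential K) fun y => ⟨pr y, hsub y⟩
  have hconv := convexOn_univ_of_forall_hasSubgradientAt fun y => ⟨pr y, hsub y⟩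
  have hfirm := hR.firmlyNonexpansive hconv
  have hRinv : ∀ y : EuclideanSpace ℝ (Fin n), R (y + pr y) = y := fun y =>
    hR.apply_add_eq (hsub y)
  have hgood := hfirm.lipschitzWith_one.ae_exists_hasFDerivAt_of_leftInverse (μ := volume) hRinv
  have huniq : ∀ {y} {B : EuclideanSpace ℝ (Fin n) ≃L[ℝ] EuclideanSpace ℝ (Fin n)},
      HasFDerivAt R (B : _ →L[ℝ] _) (y + pr y) → ∀ q ∈ K, dist y q = infDist y K → q = pr y :=
    fun hB q hq hyq =>
      (hR.eq_of_hasSubgradientAt (hsub _) (hasSubgradientAt_projPotential hq hyq) hB).symm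
  have hD : ∀ᵐ y, y ∈ uniqSet n K := hgood.mono fun y ⟨B, hB⟩ =>
    ⟨pr y, hsel y, fun q hq => huniq hB q hq.1 hq.2⟩
  filter_upwards [hgood, hD] with y ⟨B, hB⟩ hy
  have hpsd := B.inner_symm_sub_id_apply_self_nonneg (hfirm.norm_sq_le_inner_of_hasFDerivAt hB)
  have hA := hasFDerivAt_of_leftInverse_id_add hRinv
    (continuousAt_of_unique_nearest hcl hsel (huniq hB)) hB
  have hsym := B.isSymmetric_symm_sub_id (hR.isSymmetric_of_hasFDerivAt hconv hB)
  refine ⟨_, diffExtended_of_hasFDerivAt hD hy hA, hsym, hpsd, fun i => ?_⟩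
  simpa [EuclideanSpace.inner_single_right] using hpsd (EuclideanSpace.single i 1)
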